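/- arXiv:1304.7376 — 2 statements merged into one kernel-verified Lean document; each statement's English description precedes it below -/
import Mathlib

section
/- The function R(t,s) = (1/2)(t^{2H} + s^{2H} - |t-s|^{2H}) on [0,1]² is positive semidefinite for H ∈ (0,1]: for any finite collection of times t_1,...,t_n ∈ [0,1] and reals c_1,...,c_n, one has Σ_{i,j} c_i c_j R(t_i, t_j) ≥ 0. -/
/-!
For `0 < α < 2` one has `∫₀^∞ (1 - cos (x λ)) λ^(-1-α) dλ = C_α |x|^α` with `0 < C_α < ∞`,
so `|s|^α + |t|^α - |s - t|^α` is a positive mixture of the kernels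
`(1 - cos sλ) + (1 - cos tλ) - (1 - cos (s - t)λ) = (1 - cos sλ)(1 - cos tλ) + sin sλ sin tλ`,
each of which is a Gram kernel. For `α = 2` the kernel is `2 s t`.
-/

open MeasureTheory Real Set

namespace FBM

noncomputable def levyKernel (α x l : ℝ) : ℝ := (1 - cos (x * l)) * l ^ (-1 - α)

lemma levyKernel_nonneg (α x : ℝ) {l : ℝ} (hl : 0 ≤ l) : 0 ≤ levyKernel α x l :=
  mul_nonneg (by linarith [cos_le_one (x * l)]) (rpow_nonneg hl _)

lemma levyKernel_abs (α x : ℝ) : levyKernel α |x| = levyKernel α x := by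
  funext l
  rcases abs_choice x with h | h <;> simp [levyKernel, h]

lemma continuousOn_levyKernel (α x : ℝ) : ContinuousOn (levyKernel α x) (Ioi 0) :=
  (continuous_const.sub (continuous_cos.comp (continuous_const.mul continuous_id))).continuousOn
    |>.mul fun _ hl => (continuousAt_id.rpow_const (Or.inl (ne_of_gt hl))).continuousWithinAt

lemma integrableOn_levyKernel {α : ℝ} (hα : 0 < α) (hα2 : α < 2) (x : ℝ) :
    IntegrableOn (levyKernel α x) (Ioi 0) := by
  have hmeas : ∀ s ⊆ Ioi (0 : ℝ), MeasurableSet s →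
      AEStronglyMeasurable (levyKernel α x) (volume.restrict s) := fun s hs hsm =>
    ((continuousOn_levyKernel α x).mono hs).aestronglyMeasurable hsm
  -- near `0` use `1 - cos y ≤ y² / 2`, near `∞` use `1 - cos y ≤ 2`
  have near_zero : IntegrableOn (levyKernel α x) (Ioc 0 1) := by
    have hdom : IntegrableOn (fun l : ℝ => x ^ 2 / 2 * l ^ (1 - α)) (Ioc 0 1) :=
      ((intervalIntegrable_iff_integrableOn_Ioc_of_le zero_le_one).mp
        (intervalIntegral.intervalIntegrable_rpow' (by linarith))).const_mul _
    refine hdom.mono' (hmeas _ Ioc_subset_Ioi_self measurableSet_Ioc) ?_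
    filter_upwards [ae_restrict_mem measurableSet_Ioc] with l ⟨hl0, _⟩
    rw [norm_of_nonneg (levyKernel_nonneg α x hl0.le)]
    have hcos : 1 - cos (x * l) ≤ (x * l) ^ 2 / 2 := by
      linarith [one_sub_sq_div_two_le_cos (x := x * l)]
    calc levyKernel α x l ≤ (x * l) ^ 2 / 2 * l ^ (-1 - α) :=
          mul_le_mul_of_nonneg_right hcos (rpow_nonneg hl0.le _)
      _ = x ^ 2 / 2 * l ^ (1 - α) := by
          rw [show 1 - α = 2 + (-1 - α) by ring, rpow_add hl0, rpow_two]; ring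
  have near_top : IntegrableOn (levyKernel α x) (Ioi 1) := by
    have hdom : IntegrableOn (fun l : ℝ => 2 * l ^ (-1 - α)) (Ioi 1) :=
      (integrableOn_Ioi_rpow_of_lt (by linarith) one_pos).const_mul 2
    refine hdom.mono' (hmeas _ (Ioi_subset_Ioi zero_le_one) measurableSet_Ioi) ?_
    filter_upwards [ae_restrict_mem measurableSet_Ioi] with l (hl : 1 < l)
    rw [norm_of_nonneg (levyKernel_nonneg α x (by linarith))]
    exact mul_le_mul_of_nonneg_right (by linarith [neg_one_le_cos (x * l)])
      (rpow_nonneg (by linarith) _)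
  rw [← Ioc_union_Ioi_eq_Ioi zero_le_one]
  exact near_zero.union near_top

lemma integral_levyKernel_pos {α : ℝ} (hα : 0 < α) (hα2 : α < 2) :
    0 < ∫ l in Ioi 0, levyKernel α 1 l := by
  rw [setIntegral_pos_iff_support_of_nonneg_ae
    (ae_restrict_of_forall_mem measurableSet_Ioi fun l hl => levyKernel_nonneg α 1 (le_of_lt hl))
    (integrableOn_levyKernel hα hα2 1)]
  have hsupp : Ioo 0 (2 * π) ⊆ Function.support (levyKernel α 1) ∩ Ioi 0 := by
    intro l ⟨hl0, hl2π⟩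
    refine ⟨mul_ne_zero ?_ (rpow_pos_of_pos hl0 _).ne', hl0⟩
    rw [one_mul, sub_ne_zero, ne_comm, Ne, cos_eq_one_iff_of_lt_of_lt (by linarith) hl2π]
    exact hl0.ne'
  exact (measure_mono hsupp).trans_lt' (by simp [pi_pos])

lemma integral_levyKernel {α : ℝ} (hα : 0 < α) (x : ℝ) :
    ∫ l in Ioi 0, levyKernel α x l = |x| ^ α * ∫ l in Ioi 0, levyKernel α 1 l := by
  rw [← levyKernel_abs]
  rcases (abs_nonneg x).eq_or_lt with hx | hx
  · simp [← hx, levyKernel, zero_rpow hα.ne']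
  have hscale : ∀ l ∈ Ioi (0 : ℝ),
      levyKernel α |x| l = |x| ^ (1 + α) * levyKernel α 1 (|x| * l) := fun l hl => by
    rw [levyKernel, levyKernel, one_mul, mul_rpow hx.le (le_of_lt hl), mul_left_comm,
      ← mul_assoc _ (|x| ^ (-1 - α)), ← rpow_add hx]
    norm_num
  rw [setIntegral_congr_fun measurableSet_Ioi hscale, integral_const_mul,
    integral_comp_mul_left_Ioi _ _ hx, mul_zero, smul_eq_mul, ← mul_assoc, ← rpow_neg_one,
    ← rpow_add hx]
  norm_num

variable {ι : Type*} [Fintype ι]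

lemma sum_sum_one_sub_cos_eq (c a : ι → ℝ) :
    ∑ i, ∑ j, c i * c j * ((1 - cos (a i)) + (1 - cos (a j)) - (1 - cos (a i - a j))) =
      (∑ i, c i * (1 - cos (a i))) ^ 2 + (∑ i, c i * sin (a i)) ^ 2 := by
  simp only [sq, Finset.sum_mul_sum, ← Finset.sum_add_distrib]
  refine Finset.sum_congr rfl fun i _ => Finset.sum_congr rfl fun j _ => ?_
  rw [cos_sub]
  ring

lemma sum_sum_levyKernel_eq (α l : ℝ) (c t : ι → ℝ) :
    ∑ i, ∑ j, c i * c j *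
        (levyKernel α (t i) l + levyKernel α (t j) l - levyKernel α (t i - t j) l) =
      ((∑ i, c i * (1 - cos (t i * l))) ^ 2 + (∑ i, c i * sin (t i * l)) ^ 2) * l ^ (-1 - α) := by
  rw [← sum_sum_one_sub_cos_eq, Finset.sum_mul]
  refine Finset.sum_congr rfl fun i _ => ?_
  rw [Finset.sum_mul]
  refine Finset.sum_congr rfl fun j _ => ?_
  rw [levyKernel, levyKernel, levyKernel, sub_mul (t i)]
  ring

theorem sum_sum_abs_rpow_nonneg_of_lt_two {α : ℝ} (hα : 0 < α) (hα2 : α < 2) (c t : ι → ℝ) :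
    0 ≤ ∑ i, ∑ j, c i * c j * (|t i| ^ α + |t j| ^ α - |t i - t j| ^ α) := by
  have hint := integrableOn_levyKernel hα hα2
  have hrepr : (∫ l in Ioi 0, levyKernel α 1 l) *
      ∑ i, ∑ j, c i * c j * (|t i| ^ α + |t j| ^ α - |t i - t j| ^ α) =
      ∫ l in Ioi 0, ∑ i, ∑ j, c i * c j *
        (levyKernel α (t i) l + levyKernel α (t j) l - levyKernel α (t i - t j) l) := by
    have hint_ij : ∀ i j, IntegrableOn (fun l => c i * c j *
        (levyKernel α (t i) l + levyKernel α (t j) l - levyKernel α (t i - t j) l)) (Ioi 0) :=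
      fun i j => (((hint _).add (hint _)).sub (hint _)).const_mul _
    rw [integral_finsetSum _ fun i _ => integrable_finsetSum _ fun j _ => hint_ij i j,
      Finset.mul_sum]
    refine Finset.sum_congr rfl fun i _ => ?_
    rw [integral_finsetSum _ fun j _ => hint_ij i j, Finset.mul_sum]
    refine Finset.sum_congr rfl fun j _ => ?_
    have hadd : IntegrableOn (fun l => levyKernel α (t i) l + levyKernel α (t j) l) (Ioi 0) :=
      (hint _).add (hint _)
    rw [integral_const_mul, integral_sub hadd (hint _),
      integral_add (hint _) (hint _), integral_levyKernel hα (t i),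
      integral_levyKernel hα (t j), integral_levyKernel hα (t i - t j)]
    ring
  refine nonneg_of_mul_nonneg_right ?_ (integral_levyKernel_pos hα hα2)
  rw [hrepr]
  refine setIntegral_nonneg measurableSet_Ioi fun l hl => ?_
  rw [sum_sum_levyKernel_eq]
  exact mul_nonneg (by positivity) (rpow_nonneg (le_of_lt hl) _)

theorem sum_sum_abs_rpow_two_nonneg (c t : ι → ℝ) :
    0 ≤ ∑ i, ∑ j, c i * c j * (|t i| ^ (2 : ℝ) + |t j| ^ (2 : ℝ) - |t i - t j| ^ (2 : ℝ)) := by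
  have h : ∑ i, ∑ j, c i * c j * (|t i| ^ (2 : ℝ) + |t j| ^ (2 : ℝ) - |t i - t j| ^ (2 : ℝ)) =
      2 * (∑ i, c i * t i) ^ 2 := by
    rw [sq, Finset.sum_mul_sum, Finset.mul_sum]
    refine Finset.sum_congr rfl fun i _ => ?_
    rw [Finset.mul_sum]
    refine Finset.sum_congr rfl fun j _ => ?_
    simp only [rpow_two, sq_abs]
    ring
  rw [h]
  positivity

theorem sum_sum_abs_rpow_nonneg {α : ℝ} (hα : 0 < α) (hα2 : α ≤ 2) (c t : ι → ℝ) :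
    0 ≤ ∑ i, ∑ j, c i * c j * (|t i| ^ α + |t j| ^ α - |t i - t j| ^ α) := by
  rcases hα2.lt_or_eq with hα2 | rfl
  · exact sum_sum_abs_rpow_nonneg_of_lt_two hα hα2 c t
  · exact sum_sum_abs_rpow_two_nonneg c t

end FBM

open FBM in
/-- The fBm covariance `R(t,s) = ½(t^{2H}+s^{2H}-|t-s|^{2H})` is positive
semidefinite on `[0,1]²` for `H ∈ (0,1]`. -/
theorem fbm_covariance_posSemidef (H : ℝ) (hH : H ∈ Set.Ioc (0:ℝ) 1)
    (n : ℕ) (t : Fin n → ℝ) (ht : ∀ i, t i ∈ Set.Icc (0:ℝ) 1) (c : Fin n → ℝ) :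
    0 ≤ ∑ i, ∑ j,
      c i * c j * ((1/2) * ((t i) ^ (2*H) + (t j) ^ (2*H) - |t i - t j| ^ (2*H))) := by
  have h := sum_sum_abs_rpow_nonneg (α := 2 * H) (by linarith [hH.1]) (by linarith [hH.2]) c t
  simp only [abs_of_nonneg (ht _).1] at h
  calc 0 ≤ 1 / 2 * ∑ i, ∑ j, c i * c j * ((t i) ^ (2*H) + (t j) ^ (2*H) - |t i - t j| ^ (2*H)) :=
        mul_nonneg (by norm_num) h
    _ = _ := by
        simp only [Finset.mul_sum]
        refine Finset.sum_congr rfl fun i _ => Finset.sum_congr rfl fun j _ => ?_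
        ring
end

section
/- Young–Lóeve type bilinear estimate for partitions: if h : [0,1] → ℝ has finite q-variation and f : [0,1] → ℝ has finite p-variation with 1/p + 1/q > 1, then for any partition s = t_0 < ... < t_k = t, |Σ_i f(t_i)(h(t_{i+1}) - h(t_i)) - f(s)(h(t) - h(s))| ≤ C_{p,q} ‖f‖_{p-var;[s,t]} ‖h‖_{q-var;[s,t]}, where C_{p,q} = ζ(1/p + 1/q) is a finite constant depending only on p and q. -/
/-!
Young's point-removal argument. Let `r = 1/p + 1/q`. Among the `m + 1` interior points of a
partition with `m + 2` intervals, pigeonhole and Hölder's inequality with the conjugate exponents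
`p r`, `q r` give one, `t_{i+1}`, whose adjacent increments satisfy
`|f(t_{i+1}) - f(t_i)| |h(t_{i+2}) - h(t_{i+1})| ≤ (m + 1)^{-r} ‖f‖_{p-var} ‖h‖_{q-var}`,
and removing it changes the Riemann sum by exactly that product. Removing points one at a time
down to the partition `{s, t}`, whose Riemann sum is `f(s)(h(t) - h(s))`, the errors add up to
a partial sum of `ζ(r)`.
-/

open scoped ENNReal

/-- The `p`-th power of the `p`-variation of a path `x` on `[s,t]`. -/
noncomputable def pVarPow {E : Type*} [PseudoMetricSpace E] (p : ℝ) (x : ℝ → E)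
    (s t : ℝ) : ℝ≥0∞ :=
  ⨆ (k : ℕ) (π : Fin (k+1) → ℝ) (_ : Monotone π) (_ : π 0 = s) (_ : π (Fin.last k) = t),
    ∑ i : Fin k, (ENNReal.ofReal (dist (x (π i.castSucc)) (x (π i.succ)))) ^ p

open Finset

lemma sum_rpow_le_pVarPow {E : Type*} [PseudoMetricSpace E] (p : ℝ) (x : ℝ → E)
    {π : ℕ → ℝ} (hπ : Monotone π) {k : ℕ} {s t : ℝ} (h0 : π 0 = s) (hk : π k = t) :
    ∑ j ∈ range k, ENNReal.ofReal (dist (x (π j)) (x (π (j + 1)))) ^ p ≤ pVarPow p x s t := by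
  rw [← Fin.sum_univ_eq_sum_range (fun j => ENNReal.ofReal (dist (x (π j)) (x (π (j + 1)))) ^ p)]
  exact le_iSup_of_le k <| le_iSup_of_le (fun i : Fin (k + 1) => π i) <|
    le_iSup_of_le (fun _ _ hij => hπ hij) <| le_iSup_of_le h0 <| le_iSup_of_le hk le_rfl

namespace Finset

variable {ι : Type*} (s : Finset ι) (a b : ι → ℝ≥0∞)

lemma exists_card_mul_le_Lp_mul_Lq (hs : s.Nonempty) {p q : ℝ} (hpq : p.HolderConjugate q) :
    ∃ i ∈ s, #s * (a i * b i) ≤ (∑ i ∈ s, a i ^ p) ^ (1 / p) * (∑ i ∈ s, b i ^ q) ^ (1 / q) := by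
  obtain ⟨i, hi, hmin⟩ := s.exists_min_image (fun i => a i * b i) hs
  refine ⟨i, hi, ?_⟩
  calc (#s : ℝ≥0∞) * (a i * b i) = #s • (a i * b i) := (nsmul_eq_mul _ _).symm
    _ ≤ ∑ j ∈ s, a j * b j := card_nsmul_le_sum _ _ _ hmin
    _ ≤ _ := ENNReal.inner_le_Lp_mul_Lq s a b hpq

lemma exists_mul_le_card_rpow_neg_mul_Lp_mul_Lq (hs : s.Nonempty) {p q : ℝ} (hp : 0 < p)
    (hq : 0 < q) : ∃ i ∈ s, a i * b i ≤
      (#s : ℝ≥0∞) ^ (-(1 / p + 1 / q)) * (∑ i ∈ s, a i ^ p) ^ (1 / p) *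
        (∑ i ∈ s, b i ^ q) ^ (1 / q) := by
  set r := 1 / p + 1 / q
  have hr : 0 < r := by positivity
  have hconj : (p * r).HolderConjugate (q * r) := by
    convert Real.HolderConjugate.inv_inv (a := 1 / (p * r)) (b := 1 / (q * r)) (by positivity)
      (by positivity) (by simp only [r]; field_simp) using 1 <;> simp
  obtain ⟨i, hi, hle⟩ := exists_card_mul_le_Lp_mul_Lq s (fun i => a i ^ r⁻¹) (fun i => b i ^ r⁻¹)
    hs hconj
  refine ⟨i, hi, ?_⟩
  have hθ : 0 < r⁻¹ := inv_pos.2 hr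
  have key : ((#s : ℝ≥0∞) ^ r * (a i * b i)) ^ r⁻¹ ≤
      ((∑ i ∈ s, a i ^ p) ^ (1 / p) * (∑ i ∈ s, b i ^ q) ^ (1 / q)) ^ r⁻¹ := by
    convert hle using 1
    · rw [ENNReal.mul_rpow_of_nonneg _ _ hθ.le, ← ENNReal.rpow_mul, mul_inv_cancel₀ hr.ne',
        ENNReal.rpow_one, ENNReal.mul_rpow_of_nonneg _ _ hθ.le]
    · have hpr : r⁻¹ * (p * r) = p := by field_simp
      have hqr : r⁻¹ * (q * r) = q := by field_simp
      have hpr' : 1 / p * r⁻¹ = 1 / (p * r) := by field_simp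
      have hqr' : 1 / q * r⁻¹ = 1 / (q * r) := by field_simp
      simp_rw [← ENNReal.rpow_mul, hpr, hqr, ENNReal.mul_rpow_of_nonneg _ _ hθ.le,
        ← ENNReal.rpow_mul, hpr', hqr']
  have hcard : (#s : ℝ≥0∞) ^ r ≠ 0 := by simp [hs.ne_empty]
  rw [ENNReal.rpow_le_rpow_iff hθ, ENNReal.mul_le_iff_le_inv hcard (by simp [hr.le])] at key
  rwa [ENNReal.rpow_neg, mul_assoc]

end Finset

section RiemannSum

variable {α R : Type*}

def riemannSum [CommRing R] (f h : α → R) (π : ℕ → α) (m : ℕ) : R :=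
  ∑ j ∈ range m, f (π j) * (h (π (j + 1)) - h (π j))

/-- The sequence `π` with the point `π (i + 1)` removed. -/
def dropPoint (π : ℕ → α) (i : ℕ) : ℕ → α := fun j => if j ≤ i then π j else π (j + 1)

lemma dropPoint_of_le (π : ℕ → α) {i j : ℕ} (hji : j ≤ i) : dropPoint π i j = π j :=
  if_pos hji

lemma dropPoint_of_lt (π : ℕ → α) {i j : ℕ} (hij : i < j) : dropPoint π i j = π (j + 1) :=
  if_neg (Nat.not_le.2 hij)

lemma Monotone.dropPoint [Preorder α] {π : ℕ → α} (hπ : Monotone π) (i : ℕ) :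
    Monotone (dropPoint π i) := by
  intro j k hjk
  simp only [_root_.dropPoint]
  split_ifs <;> exact hπ (by omega)

lemma riemannSum_eq_riemannSum_dropPoint_add [CommRing R] (f h : α → R) (π : ℕ → α) {i m : ℕ}
    (him : i ≤ m) : riemannSum f h π (m + 2) = riemannSum f h (dropPoint π i) (m + 1) +
      (f (π (i + 1)) - f (π i)) * (h (π (i + 2)) - h (π (i + 1))) := by
  induction m, him using Nat.le_induction with
  | base =>
    have hinit : riemannSum f h (dropPoint π i) i = riemannSum f h π i :=
      sum_congr rfl fun j hj => by
        rw [mem_range] at hj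
        rw [dropPoint_of_le π hj.le, dropPoint_of_le π hj]
    simp only [riemannSum, sum_range_succ] at hinit ⊢
    rw [hinit, dropPoint_of_le π le_rfl, dropPoint_of_lt π (Nat.lt_succ_self i)]
    ring
  | succ m him ih =>
    simp only [riemannSum] at ih ⊢
    rw [sum_range_succ, ih, sum_range_succ _ (m + 1), dropPoint_of_lt π (by omega : i < m + 1),
      dropPoint_of_lt π (by omega : i < m + 2)]
    ring

lemma sum_fin_eq_riemannSum_clamp [CommRing R] (f h : α → R) {k : ℕ} (π : Fin (k + 1) → α) :
    ∑ i : Fin k, f (π i.castSucc) * (h (π i.succ) - h (π i.castSucc)) =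
      riemannSum f h (fun j => π (Fin.clamp j k)) k := by
  rw [riemannSum, ← Fin.sum_univ_eq_sum_range]
  refine sum_congr rfl fun i _ => ?_
  have hi : Fin.clamp i k = i.castSucc := by ext; simp [i.is_lt.le]
  have hi' : Fin.clamp (i + 1) k = i.succ := by ext; simp [Nat.succ_le_of_lt i.is_lt]
  rw [hi, hi']

end RiemannSum

lemma ofReal_abs_riemannSum_sub_le {p q : ℝ} (hp : 0 < p) (hq : 0 < q) (f h : ℝ → ℝ) {s t : ℝ}
    (m : ℕ) {π : ℕ → ℝ} (hπ : Monotone π) (h0 : π 0 = s) (hm : π (m + 1) = t) :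
    ENNReal.ofReal |riemannSum f h π (m + 1) - f s * (h t - h s)| ≤
      (∑ j ∈ range m, ((j : ℝ≥0∞) + 1) ^ (-(1 / p + 1 / q))) *
        pVarPow p f s t ^ (1 / p) * pVarPow q h s t ^ (1 / q) := by
  induction m generalizing π with
  | zero => simp [riemannSum, h0, hm]
  | succ m ih =>
    set a : ℕ → ℝ≥0∞ := fun j => ENNReal.ofReal (dist (f (π j)) (f (π (j + 1))))
    set b : ℕ → ℝ≥0∞ := fun j => ENNReal.ofReal (dist (h (π (j + 1))) (h (π (j + 2))))
    have hA : ∑ j ∈ range (m + 1), a j ^ p ≤ pVarPow p f s t :=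
      (sum_range_succ (fun j => a j ^ p) (m + 1) ▸ le_self_add).trans
        (sum_rpow_le_pVarPow p f hπ h0 hm)
    have hB : ∑ j ∈ range (m + 1), b j ^ q ≤ pVarPow q h s t :=
      (sum_range_succ' (fun j => ENNReal.ofReal (dist (h (π j)) (h (π (j + 1)))) ^ q) (m + 1) ▸
        le_self_add).trans (sum_rpow_le_pVarPow q h hπ h0 hm)
    obtain ⟨i, hi, hab⟩ := (range (m + 1)).exists_mul_le_card_rpow_neg_mul_Lp_mul_Lq a b
      nonempty_range_add_one hp hq
    rw [mem_range, Nat.lt_succ_iff] at hi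
    have hτ := ih (hπ.dropPoint i) (dropPoint_of_le π (Nat.zero_le i) ▸ h0)
      (dropPoint_of_lt π (Nat.lt_succ_of_le hi) ▸ hm)
    have hincr : ENNReal.ofReal |(f (π (i + 1)) - f (π i)) * (h (π (i + 2)) - h (π (i + 1)))| =
        a i * b i := by
      rw [abs_mul, ENNReal.ofReal_mul (abs_nonneg _), abs_sub_comm (f _), abs_sub_comm (h _),
        ← Real.dist_eq, ← Real.dist_eq]
    calc ENNReal.ofReal |riemannSum f h π (m + 1 + 1) - f s * (h t - h s)|
        ≤ ENNReal.ofReal |riemannSum f h (dropPoint π i) (m + 1) - f s * (h t - h s)| +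
            a i * b i := by
          rw [riemannSum_eq_riemannSum_dropPoint_add f h π hi, add_sub_right_comm, ← hincr]
          exact (ENNReal.ofReal_le_ofReal (abs_add_le _ _)).trans ENNReal.ofReal_add_le
      _ ≤ _ := by
          grw [hτ, hab, hA, hB]
          simp [sum_range_succ, add_mul]

lemma sum_range_add_one_rpow_neg_le_ofReal_tsum {r : ℝ} (hr : 1 < r) (m : ℕ) :
    ∑ j ∈ range m, ((j : ℝ≥0∞) + 1) ^ (-r) ≤ ENNReal.ofReal (∑' n : ℕ, ((n : ℝ) + 1) ^ (-r)) := by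
  have hsum : Summable fun n : ℕ => ((n : ℝ) + 1) ^ (-r) := by
    simpa using (summable_nat_add_iff 1).2 (Real.summable_nat_rpow.2 (by linarith : -r < -1))
  rw [ENNReal.ofReal_tsum_of_nonneg (fun n => by positivity) hsum]
  refine (sum_le_sum fun j _ => le_of_eq ?_).trans (ENNReal.sum_le_tsum _)
  rw [← ENNReal.ofReal_rpow_of_pos (by positivity), ENNReal.ofReal_add (by positivity) zero_le_one,
    ENNReal.ofReal_natCast, ENNReal.ofReal_one]

theorem young_loeve_partition_estimate_general (p q : ℝ) (hp : 1 ≤ p) (hq : 1 ≤ q)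
    (hpq : 1 < 1/p + 1/q) (f h : ℝ → ℝ) (s t : ℝ) :
    ∀ (k : ℕ) (π : Fin (k+1) → ℝ), Monotone π → π 0 = s → π (Fin.last k) = t →
      ENNReal.ofReal
          |(∑ i : Fin k, f (π i.castSucc) * (h (π i.succ) - h (π i.castSucc))) -
            f s * (h t - h s)| ≤
        ENNReal.ofReal (∑' n : ℕ, ((n : ℝ) + 1) ^ (-(1/p + 1/q))) *
          (pVarPow p f s t) ^ (1/p) * (pVarPow q h s t) ^ (1/q) := by
  intro k π hπ h0 hk
  cases k with
  | zero =>
    obtain rfl : s = t := h0.symm.trans hk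
    simp
  | succ m =>
    have hp0 : 0 < p := by linarith
    have hq0 : 0 < q := by linarith
    have hlast : π (Fin.clamp (m + 1) (m + 1)) = t :=
      (congrArg π (Fin.clamp_eq_last _ _ le_rfl)).trans hk
    rw [sum_fin_eq_riemannSum_clamp]
    refine (ofReal_abs_riemannSum_sub_le hp0 hq0 f h m (hπ.comp Fin.clamp_monotone) h0
      hlast).trans ?_
    grw [sum_range_add_one_rpow_neg_le_ofReal_tsum hpq m]

/-- Young–Lóeve estimate for Riemann sums along partitions:
`|Σ_i f(t_i)(h(t_{i+1}) - h(t_i)) - f(s)(h(t) - h(s))|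
  ≤ ζ(1/p + 1/q) ‖f‖_{p-var;[s,t]} ‖h‖_{q-var;[s,t]}`,
with `ζ(r) = Σ_{n≥1} n^{-r}` finite since `1/p + 1/q > 1`. -/
theorem young_loeve_partition_estimate (p q : ℝ) (hp : 1 ≤ p) (hq : 1 ≤ q)
    (hpq : 1 < 1/p + 1/q) (f h : ℝ → ℝ) (s t : ℝ) (hst : s ≤ t)
    (hf : pVarPow p f s t < ⊤) (hh : pVarPow q h s t < ⊤) :
    ∀ (k : ℕ) (π : Fin (k+1) → ℝ), Monotone π → π 0 = s → π (Fin.last k) = t →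
      ENNReal.ofReal
          |(∑ i : Fin k, f (π i.castSucc) * (h (π i.succ) - h (π i.castSucc))) -
            f s * (h t - h s)| ≤
        ENNReal.ofReal (∑' n : ℕ, ((n : ℝ) + 1) ^ (-(1/p + 1/q))) *
          (pVarPow p f s t) ^ (1/p) * (pVarPow q h s t) ^ (1/q) :=
  young_loeve_partition_estimate_general p q hp hq hpq f h s t
end
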